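/- Leaf replay for self-decomposable statistics: if the statistic f is self-decomposable, then for every pattern a whose cohort data D(a) is nonempty, f(D(a)) = f applied to the multiset of values f(L(b)) taken over the full assignments b extending a for which the leaf data L(b) is nonempty. -/
import Mathlib


/-- A full assignment `b` extends a pattern `a` (where `none` plays the role of `*`)
if for every coordinate `i` with `a i ≠ *`, `b i` equals the value prescribed by `a i`. -/
def Extends {M : ℕ} {A : Fin M → Type*} (b : ∀ i, A i) (a : ∀ i, Option (A i)) : Prop :=
  ∀ i, ∀ v, a i = some v → b i = v

instance {M : ℕ} {A : Fin M → Type*} [∀ i, Fintype (A i)] [∀ i, DecidableEq (A i)]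
    (b : ∀ i, A i) (a : ∀ i, Option (A i)) : Decidable (Extends b a) :=
  inferInstanceAs (Decidable (∀ i, ∀ v, a i = some v → b i = v))

/-- The cohort data `D(a)`: the multiset of metric values of sessions matching pattern `a`. -/
def cohortData {M : ℕ} {S : Type*} [Fintype S] {A : Fin M → Type*}
    [∀ i, Fintype (A i)] [∀ i, DecidableEq (A i)] {Mt : Type*}
    (attr : S → ∀ i, A i) (m : S → Mt) (a : ∀ i, Option (A i)) : Multiset Mt :=
  (Finset.univ.filter (fun s => Extends (attr s) a)).val.map m

/-- The leaf data `L(b)`: the multiset of metric values of sessions with attribute vector `b`. -/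
def leafData {M : ℕ} {S : Type*} [Fintype S] {A : Fin M → Type*}
    [∀ i, Fintype (A i)] [∀ i, DecidableEq (A i)] {Mt : Type*}
    (attr : S → ∀ i, A i) (m : S → Mt) (b : ∀ i, A i) : Multiset Mt :=
  (Finset.univ.filter (fun s => attr s = b)).val.map m

/-- A statistic `f : Multiset Mt → Mt` is self-decomposable if for every finite multiset `m₀`
and every decomposition of `m₀` as a sum of finitely many nonempty multisets
(represented by a multiset `P` of nonempty parts with `P.sum = m₀`),
`f m₀ = f {f m₁, …, f m_N}`. -/
def SelfDecomposable {Mt : Type*} (f : Multiset Mt → Mt) : Prop :=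
  ∀ P : Multiset (Multiset Mt), (∀ p ∈ P, p ≠ 0) → f P.sum = f (P.map f)

/-- Leaf replay for self-decomposable statistics: if `f` is self-decomposable, then for every
pattern `a` whose cohort data `D(a)` is nonempty, `f (D a)` equals `f` applied to the
multiset of values `f (L b)` taken over the full assignments `b` extending `a` for which the
leaf data `L b` is nonempty. -/
theorem leaf_replay_selfDecomposable {M : ℕ} {S : Type*} [Fintype S] {A : Fin M → Type*}
    [∀ i, Fintype (A i)] [∀ i, Nonempty (A i)] [∀ i, DecidableEq (A i)]
    {Mt : Type*} [DecidableEq Mt]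
    (attr : S → ∀ i, A i) (m : S → Mt)
    (f : Multiset Mt → Mt) (hf : SelfDecomposable f)
    (a : ∀ i, Option (A i)) (ha : cohortData attr m a ≠ 0) :
    f (cohortData attr m a) =
      f ((Finset.univ.filter
            (fun b : ∀ i, A i => Extends b a ∧ leafData attr m b ≠ 0)).val.map
          (fun b => f (leafData attr m b))) := by
  classical
  set T : Finset (∀ i, A i) := Finset.univ.filter (fun b => Extends b a) with hT
  set T' : Finset (∀ i, A i) :=
    Finset.univ.filter (fun b : ∀ i, A i => Extends b a ∧ leafData attr m b ≠ 0) with hT'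
  -- cohort data as a sum of leaf data over all extending leaves
  have hsum : cohortData attr m a = ∑ b ∈ T, leafData attr m b := by
    have hfib := Finset.sum_fiberwise_of_maps_to (g := attr)
      (s := Finset.univ.filter (fun s => Extends (attr s) a)) (t := T)
      (f := fun s => ({m s} : Multiset Mt))
      (by intro x hx; simp only [hT, Finset.mem_filter, Finset.mem_univ, true_and] at hx ⊢
          exact hx)
    have hcu : cohortData attr m a =
        ∑ s ∈ Finset.univ.filter (fun s => Extends (attr s) a), ({m s} : Multiset Mt) := by
      rw [Finset.sum_eq_multiset_sum]
      rw [cohortData]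
      rw [show (fun s => ({m s} : Multiset Mt)) = (fun x => ({x} : Multiset Mt)) ∘ m from rfl,
        ← Multiset.map_map, Multiset.sum_map_singleton]
    rw [hcu, ← hfib]
    refine Finset.sum_congr rfl (fun b hb => ?_)
    simp only [hT, Finset.mem_filter, Finset.mem_univ, true_and] at hb
    have hfil : (Finset.univ.filter (fun s => Extends (attr s) a)).filter
        (fun s => attr s = b) = Finset.univ.filter (fun s => attr s = b) := by
      ext s
      simp only [Finset.mem_filter, Finset.mem_univ, true_and, and_iff_right_iff_imp]
      rintro rfl
      exact hb
    rw [hfil, leafData, Finset.sum_eq_multiset_sum,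
      show (fun s => ({m s} : Multiset Mt)) = (fun x => ({x} : Multiset Mt)) ∘ m from rfl,
      ← Multiset.map_map, Multiset.sum_map_singleton]
  -- drop the empty leaves
  have hT'eq : T' = T.filter (fun b => leafData attr m b ≠ 0) := by
    simp [hT, hT', Finset.filter_filter]
  have hsum' : cohortData attr m a = ∑ b ∈ T', leafData attr m b := by
    rw [hsum, hT'eq, Finset.sum_filter_ne_zero]
  set P : Multiset (Multiset Mt) := T'.val.map (leafData attr m) with hP
  have hPsum : P.sum = cohortData attr m a := by
    rw [hsum', Finset.sum_eq_multiset_sum]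
  have hPne : ∀ p ∈ P, p ≠ 0 := by
    intro p hp
    simp only [hP, Multiset.mem_map] at hp
    obtain ⟨b, hb, rfl⟩ := hp
    have := Finset.mem_filter.mp hb
    exact this.2.2
  have := hf P hPne
  rw [hPsum] at this
  rw [this, hP, Multiset.map_map]
  rfl
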